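/- arXiv:1711.00891 — 4 statements merged into one kernel-verified Lean document; each statement's English description precedes it below -/
import Mathlib

section
/- Let P1 and P2 be nonempty polytopes in R^d given by P1 = {x : A1 x ≤ b1} and P2 = {x : A2 x ≤ b2}. Then conv(P1 ∪ P2) = {x ∈ R^d : ∃ x1, x2 ∈ R^d, λ ∈ R such that x = x1 + x2, A1 x1 ≤ λ b1, A2 x2 ≤ (1-λ) b2, and 0 ≤ λ ≤ 1}. -/
open Set Pointwise

noncomputable section

/-- Dot product of two vectors in `Fin n → ℝ`. -/
def dotp {n : ℕ} (c x : Fin n → ℝ) : ℝ := ∑ i, c i * x i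

/-- Dimension of a subset of `Fin n → ℝ` (dimension of its affine hull). -/
def sdim {n : ℕ} (S : Set (Fin n → ℝ)) : ℕ := Module.finrank ℝ (vectorSpan ℝ S)

/-- A polytope is the convex hull of a finite set. -/
def IsPolytope {n : ℕ} (P : Set (Fin n → ℝ)) : Prop :=
  ∃ S : Finset (Fin n → ℝ), P = convexHull ℝ (S : Set (Fin n → ℝ))

/-- The set of maximizers of the linear functional `dotp c` over `P`. -/
def maxFace {n : ℕ} (P : Set (Fin n → ℝ)) (c : Fin n → ℝ) : Set (Fin n → ℝ) :=
  {x ∈ P | ∀ y ∈ P, dotp c y ≤ dotp c x}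

/-- `F` is a (nonempty, possibly improper) face of the polytope `P`: the set of
maximizers of some linear functional over `P`. -/
def IsFaceOf {n : ℕ} (P F : Set (Fin n → ℝ)) : Prop := ∃ c, F = maxFace P c

/-- The optimality cone of a face `F` of `P`: the set of `c` whose set of maximizers
over `P` is exactly `F`. -/
def optCone {n : ℕ} (P F : Set (Fin n → ℝ)) : Set (Fin n → ℝ) := {c | maxFace P c = F}

/-- A facet: a nonempty face of codimension 1. -/
def IsFacetOf {n : ℕ} (P F : Set (Fin n → ℝ)) : Prop :=
  IsFaceOf P F ∧ F.Nonempty ∧ sdim F + 1 = sdim P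

/-- Embedding of a subset of `Fin d → ℝ` at height `α` in `Fin (d+1) → ℝ`. -/
def cay {d : ℕ} (α : ℝ) (S : Set (Fin d → ℝ)) : Set (Fin (d + 1) → ℝ) :=
  (fun x => Fin.snoc x α) '' S

/-- Orthogonal projection onto the first `d` coordinates. -/
def projd {d m : ℕ} (x : Fin (d + m) → ℝ) : Fin d → ℝ := fun i => x (Fin.castAdd m i)

/-- Width of a set in direction `c`. -/
def width {n : ℕ} (S : Set (Fin n → ℝ)) (c : Fin n → ℝ) : ℝ :=
  sSup (dotp c '' S) - sInf (dotp c '' S)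

/-- `P'` is an `ε`-approximation of `P`. -/
def EpsApprox {n : ℕ} (ε : ℝ) (P P' : Set (Fin n → ℝ)) : Prop :=
  P ⊆ P' ∧ ∀ c, width P' c ≤ (1 + ε) * width P c

/-- Binary entropy function (with the convention `0 · log₂ 0 = 0`, which holds for
`Real.logb` since `Real.logb 2 0 = 0`). -/
def binEnt (p : ℝ) : ℝ := -(p * Real.logb 2 p) - (1 - p) * Real.logb 2 (1 - p)

/-- If a nonempty polyhedron `{x : A x ≤ b}` is bounded, its recession cone is `{0}`. -/
lemma recession_zero {d n : ℕ} (A : Matrix (Fin n) (Fin d) ℝ) (b : Fin n → ℝ)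
    (P : Set (Fin d → ℝ)) (hP : P = {x | A.mulVec x ≤ b}) (hne : P.Nonempty)
    (hbdd : Bornology.IsBounded P) (v : Fin d → ℝ) (hv : A.mulVec v ≤ 0) : v = 0 := by
  obtain ⟨p, hp⟩ := hne
  obtain ⟨C, hC⟩ := hbdd.exists_norm_le
  by_contra hv0
  obtain ⟨i, hi⟩ : ∃ i, v i ≠ 0 := by
    by_contra h; push_neg at h; exact hv0 (funext h)
  have hC0 : 0 ≤ C := (norm_nonneg p).trans (hC p hp)
  set t : ℝ := (C + |p i| + 1) / |v i| with ht
  have htpos : 0 ≤ t := div_nonneg (by linarith [abs_nonneg (p i)]) (abs_nonneg _)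
  have hmem : p + t • v ∈ P := by
    rw [hP]; intro j
    have : A.mulVec (p + t • v) j = A.mulVec p j + t * A.mulVec v j := by
      simp [Matrix.mulVec_add, Matrix.mulVec_smul]
    rw [this]
    have h1 : A.mulVec p j ≤ b j := by rw [hP] at hp; exact hp j
    have h2 : t * A.mulVec v j ≤ 0 := mul_nonpos_of_nonneg_of_nonpos htpos (hv j)
    linarith
  have hle : ‖p + t • v‖ ≤ C := hC _ hmem
  have hcoord : |(p + t • v) i| ≤ C := (norm_le_pi_norm (p + t • v) i).trans hle
  have : |t * v i| ≤ C + |p i| := by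
    simp only [Pi.add_apply, Pi.smul_apply, smul_eq_mul] at hcoord
    have h := abs_add_le (p i + t * v i) (-(p i))
    rw [abs_neg] at h
    have e : p i + t * v i + -(p i) = t * v i := by ring
    rw [e] at h
    linarith
  have habs : |v i| > 0 := abs_pos.2 hi
  rw [abs_mul, abs_of_nonneg htpos, ht, div_mul_cancel₀ _ (ne_of_gt habs)] at this
  linarith

/-- Balas' theorem: description of the convex hull of the union of two nonempty
polytopes `P1 = {x : A1 x ≤ b1}` and `P2 = {x : A2 x ≤ b2}`. -/
theorem balas_union (d n1 n2 : ℕ)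
    (A1 : Matrix (Fin n1) (Fin d) ℝ) (b1 : Fin n1 → ℝ)
    (A2 : Matrix (Fin n2) (Fin d) ℝ) (b2 : Fin n2 → ℝ)
    (P1 P2 : Set (Fin d → ℝ))
    (hP1 : P1 = {x | A1.mulVec x ≤ b1}) (hP2 : P2 = {x | A2.mulVec x ≤ b2})
    (hne1 : P1.Nonempty) (hne2 : P2.Nonempty)
    (hbdd1 : Bornology.IsBounded P1) (hbdd2 : Bornology.IsBounded P2) :
    convexHull ℝ (P1 ∪ P2) =
      {x : Fin d → ℝ | ∃ (x1 x2 : Fin d → ℝ) (l : ℝ),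
        x = x1 + x2 ∧ A1.mulVec x1 ≤ l • b1 ∧ A2.mulVec x2 ≤ (1 - l) • b2 ∧
        0 ≤ l ∧ l ≤ 1} := by
  set Q : Set (Fin d → ℝ) := {x : Fin d → ℝ | ∃ (x1 x2 : Fin d → ℝ) (l : ℝ),
        x = x1 + x2 ∧ A1.mulVec x1 ≤ l • b1 ∧ A2.mulVec x2 ≤ (1 - l) • b2 ∧
        0 ≤ l ∧ l ≤ 1} with hQ
  apply le_antisymm
  · -- conv(P1 ∪ P2) ⊆ Q : Q is convex and contains P1 ∪ P2
    apply convexHull_min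
    · rintro x (hx | hx)
      · exact ⟨x, 0, 1, by simp, by rw [hP1] at hx; simpa using hx,
          by simp [Matrix.mulVec_zero], zero_le_one, le_refl 1⟩
      · exact ⟨0, x, 0, by simp, by simp [Matrix.mulVec_zero],
          by rw [hP2] at hx; simpa using hx, le_refl 0, zero_le_one⟩
    · rintro x ⟨x1, x2, l, hx, h1, h2, hl0, hl1⟩ y ⟨y1, y2, m, hy, g1, g2, hm0, hm1⟩
        s t hs ht hst
      refine ⟨s • x1 + t • y1, s • x2 + t • y2, s * l + t * m, ?_, ?_, ?_, ?_, ?_⟩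
      · rw [hx, hy]; module
      · intro j
        have hx' : A1.mulVec x1 j ≤ l * b1 j := by simpa using h1 j
        have hy' : A1.mulVec y1 j ≤ m * b1 j := by simpa using g1 j
        simp only [Matrix.mulVec_add, Matrix.mulVec_smul, Pi.add_apply, Pi.smul_apply,
          smul_eq_mul]
        nlinarith [mul_le_mul_of_nonneg_left hx' hs, mul_le_mul_of_nonneg_left hy' ht]
      · intro j
        have key : (1 - (s * l + t * m)) = s * (1 - l) + t * (1 - m) := by ring_nf; linarith
        have hx' : A2.mulVec x2 j ≤ (1 - l) * b2 j := by simpa using h2 j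
        have hy' : A2.mulVec y2 j ≤ (1 - m) * b2 j := by simpa using g2 j
        simp only [Matrix.mulVec_add, Matrix.mulVec_smul, Pi.add_apply, Pi.smul_apply,
          smul_eq_mul, key]
        nlinarith [mul_le_mul_of_nonneg_left hx' hs, mul_le_mul_of_nonneg_left hy' ht]
      · exact add_nonneg (mul_nonneg hs hl0) (mul_nonneg ht hm0)
      · nlinarith
  · -- Q ⊆ conv(P1 ∪ P2)
    rintro x ⟨x1, x2, l, hx, h1, h2, hl0, hl1⟩
    rcases eq_or_lt_of_le hl0 with hl0' | hl0'
    · -- l = 0 : x1 is in recession cone of P1, so x1 = 0 and x = x2 ∈ P2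
      have hx1 : x1 = 0 := recession_zero A1 b1 P1 hP1 hne1 hbdd1 x1
        (by simpa [← hl0'] using h1)
      have hx2 : x2 ∈ P2 := by rw [hP2]; simpa [← hl0'] using h2
      rw [hx, hx1, zero_add]
      exact subset_convexHull ℝ _ (Or.inr hx2)
    rcases eq_or_lt_of_le hl1 with hl1' | hl1'
    · have hx2 : x2 = 0 := recession_zero A2 b2 P2 hP2 hne2 hbdd2 x2
        (by simpa [hl1'] using h2)
      have hx1 : x1 ∈ P1 := by rw [hP1]; simpa [hl1'] using h1
      rw [hx, hx2, add_zero]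
      exact subset_convexHull ℝ _ (Or.inl hx1)
    · -- 0 < l < 1
      have hlpos : (0:ℝ) < l := hl0'
      have h1lpos : (0:ℝ) < 1 - l := by linarith
      have hp1 : l⁻¹ • x1 ∈ P1 := by
        rw [hP1]
        intro j
        have := h1 j
        simp only [Matrix.mulVec_smul, Pi.smul_apply, smul_eq_mul] at *
        rw [inv_mul_le_iff₀ hlpos]
        linarith
      have hp2 : (1 - l)⁻¹ • x2 ∈ P2 := by
        rw [hP2]
        intro j
        have := h2 j
        simp only [Matrix.mulVec_smul, Pi.smul_apply, smul_eq_mul] at *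
        rw [inv_mul_le_iff₀ h1lpos]
        linarith
      have hxc : x = l • (l⁻¹ • x1) + (1 - l) • ((1 - l)⁻¹ • x2) := by
        rw [smul_smul, smul_smul, mul_inv_cancel₀ (ne_of_gt hlpos),
          mul_inv_cancel₀ (ne_of_gt h1lpos), one_smul, one_smul, hx]
      rw [hxc]
      exact (convex_convexHull ℝ (P1 ∪ P2))
        (subset_convexHull ℝ _ (Or.inl hp1))
        (subset_convexHull ℝ _ (Or.inr hp2))
        (le_of_lt hlpos) (le_of_lt h1lpos) (by ring)
end
end

section
/- Let Q ⊆ R^{d+m} be a full-dimensional polytope with f(Q) facets whose orthogonal projection to R^d is a d-dimensional polytope P with f(P) facets. Then f(P) ≤ (f(Q)+1)^{m+1}. -/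
open Set Pointwise

noncomputable section

/-!
Each facet `F` of `P` maximizes a functional `c` over `P`. Padding `c` with zeros gives a
functional on `ℝ^(d+m)` whose face `G` in `Q` projects onto `F`; as projection cannot raise
dimension, `G` has codimension at most `m + 1` in `Q`. In a full-dimensional polytope the normal
cone of a face is generated by the normals of the facets containing it, so by conic Carathéodory
`G` is cut out of `Q` by at most `codim G` of these facets, whose normals are linearly independent
in the orthogonal complement of `G`. Thus `F` is determined by a set of at most `m + 1` facets of
`Q`, and there are at most `(f(Q) + 1)^(m+1)` such sets.
-/

section ConicCaratheodory

variable {𝕜 M : Type*} [Field 𝕜] [LinearOrder 𝕜] [IsStrictOrderedRing 𝕜] [AddCommGroup M]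
  [Module 𝕜 M]

lemma exists_ssubset_pos_sum_eq_of_not_linearIndepOn {t : Finset M} {lam : M → 𝕜}
    (hlam : ∀ v ∈ t, 0 < lam v) (hdep : ¬ LinearIndepOn 𝕜 id (t : Set M)) :
    ∃ t' ⊂ t, ∃ lam' : M → 𝕜, (∀ v ∈ t', 0 < lam' v) ∧
      ∑ v ∈ t', lam' v • v = ∑ v ∈ t, lam v • v := by
  obtain ⟨g, hg, v₀, hv₀, hgv₀⟩ : ∃ g : M → 𝕜, ∑ v ∈ t, g v • v = 0 ∧ ∃ v₀ ∈ t, 0 < g v₀ := by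
    simp only [linearIndepOn_finset_iff, id, not_forall] at hdep
    obtain ⟨g, hg, v₀, hv₀, hne⟩ := hdep
    rcases lt_or_gt_of_ne hne with hneg | hpos
    · exact ⟨-g, by simp [neg_smul, hg], v₀, hv₀, by simpa using hneg⟩
    · exact ⟨g, hg, v₀, hv₀, hpos⟩
  -- move from `lam` along `-g` until the first coefficient hits zero
  set tpos := t.filter (0 < g ·)
  have htpos : tpos.Nonempty := ⟨v₀, Finset.mem_filter.2 ⟨hv₀, hgv₀⟩⟩
  obtain ⟨v₁, hv₁, hr⟩ := Finset.exists_mem_eq_inf' htpos (fun v => lam v / g v)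
  set r := tpos.inf' htpos (fun v => lam v / g v)
  obtain ⟨hv₁t, hgv₁⟩ := Finset.mem_filter.1 hv₁
  set lam' := fun v => lam v - r * g v
  have hlam' : ∀ v ∈ t, 0 ≤ lam' v := by
    intro v hv
    rcases le_or_gt (g v) 0 with hgv | hgv
    · have hr0 : 0 < r := hr ▸ div_pos (hlam v₁ hv₁t) hgv₁
      have := hlam v hv
      simp only [lam']
      nlinarith
    · have : r ≤ lam v / g v := Finset.inf'_le _ (Finset.mem_filter.2 ⟨hv, hgv⟩)
      simp only [lam', sub_nonneg]
      exact (le_div_iff₀ hgv).1 this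
  have hlam'v₁ : lam' v₁ = 0 := by
    simp only [lam', hr]
    field_simp
    ring
  refine ⟨t.filter (0 < lam' ·), ?_, lam', fun v hv => (Finset.mem_filter.1 hv).2, ?_⟩
  · exact Finset.filter_ssubset.2 ⟨v₁, hv₁t, by simp [hlam'v₁]⟩
  · rw [Finset.sum_filter_of_ne fun v hv hne => (hlam' v hv).lt_of_ne' (by
      rintro h; exact hne (by rw [h, zero_smul]))]
    simp only [lam', sub_smul, mul_smul, Finset.sum_sub_distrib, ← Finset.smul_sum, hg,
      smul_zero, sub_zero]

/-- Conic Carathéodory theorem. -/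
lemma exists_linearIndepOn_pos_sum_eq (t : Finset M) (lam : M → 𝕜) (hlam : ∀ v ∈ t, 0 < lam v) :
    ∃ t' ⊆ t, LinearIndepOn 𝕜 id (t' : Set M) ∧ ∃ lam' : M → 𝕜, (∀ v ∈ t', 0 < lam' v) ∧
      ∑ v ∈ t', lam' v • v = ∑ v ∈ t, lam v • v := by
  induction t using Finset.strongInduction generalizing lam with
  | H t ih =>
    by_cases hind : LinearIndepOn 𝕜 id (t : Set M)
    · exact ⟨t, subset_rfl, hind, lam, hlam, rfl⟩
    obtain ⟨t₁, ht₁, lam₁, hlam₁, hsum₁⟩ :=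
      exists_ssubset_pos_sum_eq_of_not_linearIndepOn hlam hind
    obtain ⟨t', ht', hind', lam', hlam', hsum'⟩ := ih t₁ ht₁ lam₁ hlam₁
    exact ⟨t', ht'.trans ht₁.subset, hind', lam', hlam', hsum'.trans hsum₁⟩

lemma exists_linearIndepOn_pos_sum_eq_of_mem_hull {s : Set M} {x : M}
    (hx : x ∈ PointedCone.hull 𝕜 s) :
    ∃ t : Finset M, ↑t ⊆ s ∧ LinearIndepOn 𝕜 id (t : Set M) ∧ ∃ lam : M → 𝕜,
      (∀ v ∈ t, 0 < lam v) ∧ ∑ v ∈ t, lam v • v = x := by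
  obtain ⟨c, hcs, hc0, rfl⟩ := PointedCone.mem_hull_set.1 hx
  obtain ⟨t, ht, hind, lam, hlam, hsum⟩ := exists_linearIndepOn_pos_sum_eq c.support c
    fun v hv => (hc0 v).lt_of_ne' (Finsupp.mem_support_iff.1 hv)
  exact ⟨t, (Finset.coe_subset.2 ht).trans hcs, hind, lam, hlam, hsum⟩

end ConicCaratheodory

lemma card_powerset_filter_card_le_le {α : Type*} (s : Finset α) (k : ℕ) :
    (s.powerset.filter (·.card ≤ k)).card ≤ (s.card + 1) ^ k := by
  classical
  calc (s.powerset.filter (·.card ≤ k)).card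
      ≤ ((Finset.range (k + 1)).biUnion fun i => s.powersetCard i).card := by
        refine Finset.card_le_card fun T hT => ?_
        simp only [Finset.mem_filter, Finset.mem_powerset] at hT
        simpa [Finset.mem_powersetCard, hT.1, Nat.lt_succ_iff] using hT.2
    _ ≤ ∑ i ∈ Finset.range (k + 1), (s.powersetCard i).card := Finset.card_biUnion_le
    _ ≤ ∑ i ∈ Finset.range (k + 1), s.card ^ i * 1 ^ (k - i) * k.choose i := by
        refine Finset.sum_le_sum fun i hi => ?_
        rw [Finset.card_powersetCard, one_pow, mul_one]
        exact (Nat.choose_le_pow _ _).trans (Nat.le_mul_of_pos_right _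
          (Nat.choose_pos (Nat.lt_succ_iff.1 (Finset.mem_range.1 hi))))
    _ = (s.card + 1) ^ k := (add_pow _ _ _).symm

section Faces

variable {N : ℕ}

lemma dotp_eq_dotProduct (c x : Fin N → ℝ) : dotp c x = c ⬝ᵥ x := rfl

lemma isLinearMap_dotp (c : Fin N → ℝ) : IsLinearMap ℝ (dotp c) :=
  ⟨dotProduct_add c, fun a x => dotProduct_smul a c x⟩

lemma dotp_le_of_mem_convexHull {A : Set (Fin N → ℝ)} {c x : Fin N → ℝ} {r : ℝ}
    (h : ∀ a ∈ A, dotp c a ≤ r) (hx : x ∈ convexHull ℝ A) : dotp c x ≤ r :=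
  convexHull_min h (convex_halfSpace_le (isLinearMap_dotp c) r) hx

lemma le_dotp_of_mem_convexHull {A : Set (Fin N → ℝ)} {c x : Fin N → ℝ} {r : ℝ}
    (h : ∀ a ∈ A, r ≤ dotp c a) (hx : x ∈ convexHull ℝ A) : r ≤ dotp c x :=
  convexHull_min h (convex_halfSpace_ge (isLinearMap_dotp c) r) hx

lemma maxFace_subset (Q : Set (Fin N → ℝ)) (c : Fin N → ℝ) : maxFace Q c ⊆ Q := fun _ h => h.1

lemma dotp_eq_of_mem_maxFace {Q : Set (Fin N → ℝ)} {c x y : Fin N → ℝ}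
    (hx : x ∈ maxFace Q c) (hy : y ∈ maxFace Q c) : dotp c x = dotp c y :=
  le_antisymm (hy.2 x hx.1) (hx.2 y hy.1)

lemma mem_maxFace_convexHull_iff {A : Set (Fin N → ℝ)} {c x : Fin N → ℝ} :
    x ∈ maxFace (convexHull ℝ A) c ↔ x ∈ convexHull ℝ A ∧ ∀ a ∈ A, dotp c a ≤ dotp c x :=
  ⟨fun h => ⟨h.1, fun a ha => h.2 a (subset_convexHull ℝ A ha)⟩,
    fun h => ⟨h.1, fun _ hy => dotp_le_of_mem_convexHull h.2 hy⟩⟩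

lemma maxFace_convexHull_eq_convexHull_inter (S : Finset (Fin N → ℝ)) (c : Fin N → ℝ) :
    maxFace (convexHull ℝ ↑S) c = convexHull ℝ (↑S ∩ maxFace (convexHull ℝ ↑S) c) := by
  classical
  set F := maxFace (convexHull ℝ ↑S) c
  apply Subset.antisymm
  · rintro x hx
    obtain ⟨w, hw0, hw1, hwx⟩ := (Finset.mem_convexHull' (R := ℝ)).1 hx.1
    have hle : ∀ s ∈ S, dotp c s ≤ dotp c x := (mem_maxFace_convexHull_iff.1 hx).2
    -- the weights of non-maximizing vertices must vanish, since `dotp c x` is their average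
    have hgap : ∑ s ∈ S, w s * (dotp c x - dotp c s) = 0 := by
      simp only [mul_sub, Finset.sum_sub_distrib, ← Finset.sum_mul, hw1, one_mul]
      rw [← hwx]
      simp [dotp_eq_dotProduct, dotProduct_sum, dotProduct_smul]
    have hvanish : ∀ s ∈ S, s ∉ F → w s = 0 := by
      intro s hs hsF
      have hlt : dotp c s < dotp c x := lt_of_le_of_ne (hle s hs) fun h =>
        hsF (mem_maxFace_convexHull_iff.2 ⟨subset_convexHull ℝ _ hs, fun a ha => h ▸ hle a ha⟩)
      have := (Finset.sum_eq_zero_iff_of_nonneg fun s hs =>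
        mul_nonneg (hw0 s hs) (sub_nonneg.2 (hle s hs))).1 hgap s hs
      exact (mul_eq_zero.1 this).resolve_right (sub_ne_zero.2 hlt.ne')
    have hcoe : (↑(S.filter (· ∈ F)) : Set (Fin N → ℝ)) = ↑S ∩ F := Finset.coe_filter _ _
    rw [← hcoe]
    refine (Finset.mem_convexHull' (R := ℝ)).2 ⟨w, fun s hs => hw0 s (Finset.mem_filter.1 hs).1,
      ?_, ?_⟩
    · rw [Finset.sum_filter_of_ne fun s hs hne => by_contra fun h => hne (hvanish s hs h), hw1]
    · rw [Finset.sum_filter_of_ne fun s hs hne => by_contra fun h => hne (by simp [hvanish s hs h]),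
        hwx]
  · intro x hx
    rcases (↑S ∩ F).eq_empty_or_nonempty with h | ⟨s₀, -, hs₀⟩
    · simp [h] at hx
    refine ⟨convexHull_mono inter_subset_left hx, fun y hy => ?_⟩
    calc dotp c y ≤ dotp c s₀ := hs₀.2 y hy
      _ ≤ dotp c x := le_dotp_of_mem_convexHull
          (fun a ha => (dotp_eq_of_mem_maxFace hs₀ ha.2).le) hx

lemma setOf_isFaceOf_convexHull_finite (S : Finset (Fin N → ℝ)) :
    {F | IsFaceOf (convexHull ℝ (S : Set (Fin N → ℝ))) F}.Finite := by
  refine ((S.finite_toSet.finite_subsets).image (convexHull ℝ)).subset ?_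
  rintro F ⟨c, rfl⟩
  exact ⟨_, inter_subset_left, (maxFace_convexHull_eq_convexHull_inter S c).symm⟩

lemma maxFace_sum_smul {Q : Set (Fin N → ℝ)} (t : Finset (Fin N → ℝ)) (lam : (Fin N → ℝ) → ℝ)
    (hlam : ∀ v ∈ t, 0 < lam v) {x₀ : Fin N → ℝ} (hx₀ : x₀ ∈ Q)
    (hx₀t : ∀ v ∈ t, x₀ ∈ maxFace Q v) :
    maxFace Q (∑ v ∈ t, lam v • v) = Q ∩ ⋂ v ∈ t, maxFace Q v := by
  have hsum : ∀ y, dotp (∑ v ∈ t, lam v • v) y = ∑ v ∈ t, lam v * dotp v y := fun y => by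
    simp [dotp_eq_dotProduct, sum_dotProduct, smul_dotProduct]
  ext x
  simp only [mem_inter_iff, mem_iInter₂]
  constructor
  · rintro ⟨hxQ, hxmax⟩
    refine ⟨hxQ, fun v hv => ⟨hxQ, fun y hy => ?_⟩⟩
    have hgap : ∑ v ∈ t, lam v * (dotp v x₀ - dotp v x) = 0 := by
      refine le_antisymm ?_ (Finset.sum_nonneg fun v hv =>
        mul_nonneg (hlam v hv).le (sub_nonneg.2 ((hx₀t v hv).2 x hxQ)))
      have := hxmax x₀ hx₀
      simp only [hsum, mul_sub, Finset.sum_sub_distrib] at this ⊢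
      linarith
    have := (Finset.sum_eq_zero_iff_of_nonneg fun v hv =>
      mul_nonneg (hlam v hv).le (sub_nonneg.2 ((hx₀t v hv).2 x hxQ))).1 hgap v hv
    have hveq := sub_eq_zero.1 ((mul_eq_zero.1 this).resolve_left (hlam v hv).ne')
    exact hveq ▸ (hx₀t v hv).2 y hy
  · rintro ⟨hxQ, hxt⟩
    refine ⟨hxQ, fun y hy => ?_⟩
    rw [hsum, hsum]
    exact Finset.sum_le_sum fun v hv =>
      mul_le_mul_of_nonneg_left ((hxt v hv).2 y hy) (hlam v hv).le

def dotOrthogonal (U : Submodule ℝ (Fin N → ℝ)) : Submodule ℝ (Fin N → ℝ) :=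
  U.dualAnnihilator.comap (dotProductEquiv ℝ (Fin N)).toLinearMap

lemma mem_dotOrthogonal {U : Submodule ℝ (Fin N → ℝ)} {c : Fin N → ℝ} :
    c ∈ dotOrthogonal U ↔ ∀ x ∈ U, dotp c x = 0 := by
  simp [dotOrthogonal, Submodule.mem_dualAnnihilator, dotp_eq_dotProduct]

lemma finrank_dotOrthogonal_add_finrank (U : Submodule ℝ (Fin N → ℝ)) :
    Module.finrank ℝ (dotOrthogonal U) + Module.finrank ℝ U = N := by
  rw [dotOrthogonal, Submodule.comap_equiv_eq_map_symm, LinearEquiv.finrank_map_eq, add_comm,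
    Subspace.finrank_add_finrank_dualAnnihilator_eq, Module.finrank_fin_fun]

lemma dotOrthogonal_top : dotOrthogonal (⊤ : Submodule ℝ (Fin N → ℝ)) = ⊥ := by
  rw [eq_bot_iff]
  intro c hc
  exact dotProduct_self_eq_zero.1 (mem_dotOrthogonal.1 hc c Submodule.mem_top)

lemma mem_dotOrthogonal_vectorSpan_iff {A : Set (Fin N → ℝ)} {c : Fin N → ℝ} :
    c ∈ dotOrthogonal (vectorSpan ℝ A) ↔ ∀ x ∈ A, ∀ y ∈ A, dotp c x = dotp c y := by
  rw [mem_dotOrthogonal]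
  constructor
  · intro h x hx y hy
    have := h _ (vsub_mem_vectorSpan ℝ hx hy)
    rwa [vsub_eq_sub, dotp_eq_dotProduct, dotProduct_sub, sub_eq_zero] at this
  · intro h z hz
    have hker : vectorSpan ℝ A ≤ LinearMap.ker (dotProductEquiv ℝ (Fin N) c) := by
      rw [vectorSpan_def, Submodule.span_le]
      rintro _ ⟨x, hx, y, hy, rfl⟩
      simp [dotProduct_sub, ← dotp_eq_dotProduct, h x hx y hy]
    exact hker hz

lemma mem_dotOrthogonal_vectorSpan_maxFace (Q : Set (Fin N → ℝ)) (c : Fin N → ℝ) :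
    c ∈ dotOrthogonal (vectorSpan ℝ (maxFace Q c)) :=
  mem_dotOrthogonal_vectorSpan_iff.2 fun _ hx _ hy => dotp_eq_of_mem_maxFace hx hy

lemma sdim_lt_sdim_of_maxFace_subset {Q G : Set (Fin N → ℝ)} {c x : Fin N → ℝ}
    (hne : (maxFace Q c).Nonempty) (hsub : maxFace Q c ⊆ G) (hGQ : G ⊆ Q) (hx : x ∈ G)
    (hxc : x ∉ maxFace Q c) : sdim (maxFace Q c) < sdim G := by
  obtain ⟨g, hg⟩ := hne
  refine Submodule.finrank_lt_finrank_of_lt ((SetLike.lt_iff_le_and_exists).2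
    ⟨vectorSpan_mono ℝ hsub, x -ᵥ g, vsub_mem_vectorSpan ℝ hx (hsub hg), fun hmem => hxc ?_⟩)
  have hcx : dotp c x = dotp c g := by
    have := mem_dotOrthogonal.1 (mem_dotOrthogonal_vectorSpan_maxFace Q c) _ hmem
    rwa [vsub_eq_sub, dotp_eq_dotProduct, dotProduct_sub, sub_eq_zero] at this
  exact ⟨hGQ hx, fun y hy => hcx ▸ hg.2 y hy⟩

lemma dotp_add_smul_left (u w x : Fin N → ℝ) (t : ℝ) :
    dotp (u + t • w) x = dotp u x + t * dotp w x := by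
  simp [dotp_eq_dotProduct, add_dotProduct, smul_dotProduct]

lemma dotp_sub_smul_left (u w x : Fin N → ℝ) (t : ℝ) :
    dotp (u - t • w) x = dotp u x - t * dotp w x := by
  simp [dotp_eq_dotProduct, sub_dotProduct, smul_dotProduct]

section NormalCone

variable {S : Finset (Fin N → ℝ)} {u : Fin N → ℝ}

local notation "Q" => convexHull ℝ (S : Set (Fin N → ℝ))

lemma maxFace_convexHull_nonempty (hS : S.Nonempty) (c : Fin N → ℝ) :
    (maxFace Q c).Nonempty := by
  obtain ⟨s, hs, hmax⟩ := S.exists_max_image (dotp c) hS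
  exact ⟨s, mem_maxFace_convexHull_iff.2 ⟨subset_convexHull ℝ _ hs, hmax⟩⟩

lemma mem_maxFace_of_mem_of_dotp_eq {x s₀ : Fin N → ℝ}
    (hs₀ : s₀ ∈ maxFace Q u) (hx : x ∈ S) (h : dotp u x = dotp u s₀) :
    x ∈ maxFace Q u :=
  ⟨subset_convexHull ℝ _ hx, fun y hy => h ▸ hs₀.2 y hy⟩

/-- Tilt `u` towards `w` until the first vertex outside the face of `u` becomes a maximizer. -/
lemma exists_pos_sdim_lt_maxFace_add_smul {w s₀ s₁ : Fin N → ℝ}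
    (hs₀ : s₀ ∈ maxFace Q u)
    (hw : w ∈ dotOrthogonal (vectorSpan ℝ (maxFace Q u)))
    (hs₁ : s₁ ∈ S) (hws : dotp w s₀ < dotp w s₁) :
    ∃ t : ℝ, 0 < t ∧ maxFace Q u ⊆ maxFace Q (u + t • w) ∧
      sdim (maxFace Q u) < sdim (maxFace Q (u + t • w)) := by
  set G := maxFace Q u
  have hwG := mem_dotOrthogonal_vectorSpan_iff.1 hw
  set a := fun s => dotp u s - dotp u s₀
  set b := fun s => dotp w s - dotp w s₀
  have ha : ∀ s ∈ S, a s ≤ 0 := fun s hs => sub_nonpos.2 (hs₀.2 s (subset_convexHull ℝ _ hs))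
  have hab : ∀ s ∈ S, 0 < b s → a s < 0 := fun s hs hb => (ha s hs).lt_of_ne fun h =>
    hb.ne' (sub_eq_zero.2 (hwG s (mem_maxFace_of_mem_of_dotp_eq hs₀ hs (sub_eq_zero.1 h)) s₀ hs₀))
  set B := S.filter (0 < b ·)
  have hB : B.Nonempty := ⟨s₁, Finset.mem_filter.2 ⟨hs₁, sub_pos.2 hws⟩⟩
  obtain ⟨s₂, hs₂, ht⟩ := Finset.exists_mem_eq_inf' hB (fun s => -a s / b s)
  obtain ⟨hs₂S, hbs₂⟩ := Finset.mem_filter.1 hs₂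
  set t := B.inf' hB (fun s => -a s / b s)
  have htpos : 0 < t := ht ▸ div_pos (neg_pos.2 (hab s₂ hs₂S hbs₂)) hbs₂
  have hfeas : ∀ s ∈ S, a s + t * b s ≤ 0 := by
    intro s hs
    rcases le_or_gt (b s) 0 with hb | hb
    · nlinarith [ha s hs]
    · have : t ≤ -a s / b s := Finset.inf'_le _ (Finset.mem_filter.2 ⟨hs, hb⟩)
      rw [le_div_iff₀ hb] at this
      linarith
  have hval : ∀ x, dotp (u + t • w) x - dotp (u + t • w) s₀ = a x + t * b x := fun x => by
    simp only [dotp_add_smul_left, a, b]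
    ring
  have hs₀' : s₀ ∈ maxFace Q (u + t • w) :=
    mem_maxFace_convexHull_iff.2 ⟨hs₀.1, fun s hs => sub_nonpos.1 (hval s ▸ hfeas s hs)⟩
  have hGsub : G ⊆ maxFace Q (u + t • w) := by
    intro x hx
    have hx₀ : dotp (u + t • w) x = dotp (u + t • w) s₀ := by
      rw [dotp_add_smul_left, dotp_add_smul_left, dotp_eq_of_mem_maxFace hx hs₀, hwG x hx s₀ hs₀]
    exact ⟨hx.1, fun y hy => hx₀ ▸ hs₀'.2 y hy⟩
  have hs₂' : s₂ ∈ maxFace Q (u + t • w) := by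
    refine mem_maxFace_of_mem_of_dotp_eq hs₀' hs₂S (sub_eq_zero.1 ?_)
    rw [hval, ht, div_mul_cancel₀ _ hbs₂.ne']
    ring
  have hs₂G : s₂ ∉ G := fun h =>
    (hab s₂ hs₂S hbs₂).ne (sub_eq_zero.2 (dotp_eq_of_mem_maxFace h hs₀))
  exact ⟨t, htpos, hGsub,
    sdim_lt_sdim_of_maxFace_subset ⟨s₀, hs₀⟩ hGsub (maxFace_subset _ _) hs₂' hs₂G⟩

lemma vectorSpan_eq_top_of_sdim_convexHull_eq {A : Set (Fin N → ℝ)}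
    (hA : sdim (convexHull ℝ A) = N) : vectorSpan ℝ A = ⊤ := by
  rw [sdim, ← direction_affineSpan, affineSpan_convexHull, direction_affineSpan] at hA
  exact Submodule.eq_top_of_finrank_eq (hA.trans (Module.finrank_fin_fun ℝ).symm)

variable (hfull : sdim (convexHull ℝ (S : Set (Fin N → ℝ))) = N)
include hfull

lemma eq_smul_of_dotp_sub_eq_mul {w s₀ : Fin N → ℝ} {ρ : ℝ}
    (hs₀ : s₀ ∈ maxFace Q u)
    (hw : w ∈ dotOrthogonal (vectorSpan ℝ (maxFace Q u)))
    (h : ∀ s ∈ S, s ∉ maxFace Q u →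
      dotp w s - dotp w s₀ = ρ * (dotp u s - dotp u s₀)) :
    w = ρ • u := by
  have hconst : ∀ s ∈ S, dotp (w - ρ • u) s = dotp (w - ρ • u) s₀ := by
    intro s hs
    rw [dotp_sub_smul_left, dotp_sub_smul_left]
    by_cases hsG : s ∈ maxFace Q u
    · rw [mem_dotOrthogonal_vectorSpan_iff.1 hw s hsG s₀ hs₀, dotp_eq_of_mem_maxFace hsG hs₀]
    · linarith [h s hs hsG]
  have : w - ρ • u ∈ dotOrthogonal (vectorSpan ℝ (S : Set (Fin N → ℝ))) :=
    mem_dotOrthogonal_vectorSpan_iff.2 fun x hx y hy => (hconst x hx).trans (hconst y hy).symm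
  rw [vectorSpan_eq_top_of_sdim_convexHull_eq hfull, dotOrthogonal_top, Submodule.mem_bot,
    sub_eq_zero] at this
  exact this

lemma exists_dotOrthogonal_sign_change {s₀ : Fin N → ℝ}
    (hs₀ : s₀ ∈ maxFace Q u) (hcodim : sdim (maxFace Q u) + 2 ≤ N) :
    ∃ w ∈ dotOrthogonal (vectorSpan ℝ (maxFace Q u)), ∃ s₁ ∈ S, ∃ s₂ ∈ S,
      dotp w s₂ < dotp w s₀ ∧ dotp w s₀ < dotp w s₁ := by
  set G := maxFace Q u
  obtain ⟨w₀, hw₀, hw₀u⟩ : ∃ w₀ ∈ dotOrthogonal (vectorSpan ℝ G), w₀ ∉ ℝ ∙ u := by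
    refine SetLike.not_le_iff_exists.1 fun hle => ?_
    have h1 := Submodule.finrank_mono hle
    have h2 : Module.finrank ℝ (ℝ ∙ u) ≤ 1 := (finrank_span_le_card {u}).trans (by simp)
    have h3 := finrank_dotOrthogonal_add_finrank (vectorSpan ℝ G)
    rw [sdim] at hcodim
    omega
  set a := fun s => dotp u s - dotp u s₀
  set r := fun s => (dotp w₀ s - dotp w₀ s₀) / a s
  have ha : ∀ s ∈ S, s ∉ G → a s < 0 := fun s hs hsG =>
    sub_neg.2 ((hs₀.2 s (subset_convexHull ℝ _ hs)).lt_of_ne fun h =>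
      hsG (mem_maxFace_of_mem_of_dotp_eq hs₀ hs h))
  -- the ratios `r` are not constant outside `G`, otherwise `w₀` would be a multiple of `u`
  obtain ⟨s₁, hs₁, hs₁G, s₂, hs₂, hs₂G, hr⟩ :
      ∃ s₁ ∈ S, s₁ ∉ G ∧ ∃ s₂ ∈ S, s₂ ∉ G ∧ r s₁ < r s₂ := by
    by_contra! hcon
    obtain ⟨s', hs', hs'G⟩ : ∃ s' ∈ S, s' ∉ G := by
      by_contra! hSG
      have hspan := vectorSpan_mono ℝ (show (S : Set (Fin N → ℝ)) ⊆ G from hSG)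
      rw [vectorSpan_eq_top_of_sdim_convexHull_eq hfull, top_le_iff] at hspan
      rw [sdim, hspan, finrank_top, Module.finrank_fin_fun] at hcodim
      omega
    have hw₀eq : w₀ = r s' • u := eq_smul_of_dotp_sub_eq_mul hfull hs₀ hw₀ fun s hs hsG => by
      rw [← le_antisymm (hcon s' hs' hs'G s hs hsG) (hcon s hs hsG s' hs' hs'G)]
      exact (div_mul_cancel₀ _ (ha s hs hsG).ne).symm
    exact hw₀u (hw₀eq ▸ Submodule.smul_mem _ _ (Submodule.mem_span_singleton_self u))
  obtain ⟨ρ, hρ₁, hρ₂⟩ := exists_between hr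
  have hgap : ∀ s ∈ S, s ∉ G →
      dotp (w₀ - ρ • u) s - dotp (w₀ - ρ • u) s₀ = a s * (r s - ρ) := by
    intro s hs hsG
    have := (ha s hs hsG).ne
    simp only [dotp_sub_smul_left, r, a] at this ⊢
    field_simp
    ring
  refine ⟨w₀ - ρ • u, sub_mem hw₀ (Submodule.smul_mem _ _
    (mem_dotOrthogonal_vectorSpan_maxFace _ u)), s₁, hs₁, s₂, hs₂, ?_, ?_⟩
  · have := mul_neg_of_neg_of_pos (ha s₂ hs₂ hs₂G) (show 0 < r s₂ - ρ by linarith)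
    linarith [hgap s₂ hs₂ hs₂G]
  · have := mul_pos_of_neg_of_neg (ha s₁ hs₁ hs₁G) (show r s₁ - ρ < 0 by linarith)
    linarith [hgap s₁ hs₁ hs₁G]

/-- By induction on the codimension of the face of `u`: in codimension at least two, `u` is a
positive combination of two tilts of `u` whose faces are strictly larger. -/
theorem mem_hull_facet_normals (hS : S.Nonempty) (u : Fin N → ℝ) :
    u ∈ PointedCone.hull ℝ {v | IsFacetOf Q (maxFace Q v) ∧
      maxFace Q u ⊆ maxFace Q v} := by
  induction hk : N - sdim (maxFace Q u) using Nat.strong_induction_on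
    generalizing u with
  | _ k ih =>
  have hle : sdim (maxFace Q u) ≤ N :=
    (Submodule.finrank_le _).trans (Module.finrank_fin_fun ℝ).le
  obtain ⟨s₀, hs₀⟩ := maxFace_convexHull_nonempty hS u
  rcases (by omega : sdim (maxFace Q u) = N ∨ sdim (maxFace Q u) + 1 = N ∨
    sdim (maxFace Q u) + 2 ≤ N) with hG | hG | hG
  · have htop : vectorSpan ℝ (maxFace Q u) = ⊤ :=
      Submodule.eq_top_of_finrank_eq (hG.trans (Module.finrank_fin_fun ℝ).symm)
    have hu := mem_dotOrthogonal_vectorSpan_maxFace Q u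
    rw [htop, dotOrthogonal_top, Submodule.mem_bot] at hu
    exact hu ▸ zero_mem _
  · exact Submodule.subset_span ⟨⟨⟨u, rfl⟩, ⟨s₀, hs₀⟩, hG.trans hfull.symm⟩, subset_rfl⟩
  · obtain ⟨w, hw, s₁, hs₁, s₂, hs₂, hws₂, hws₁⟩ := exists_dotOrthogonal_sign_change hfull hs₀ hG
    obtain ⟨t₁, ht₁, hG₁, hdim₁⟩ := exists_pos_sdim_lt_maxFace_add_smul hs₀ hw hs₁ hws₁
    obtain ⟨t₂, ht₂, hG₂, hdim₂⟩ := exists_pos_sdim_lt_maxFace_add_smul hs₀ (neg_mem hw) hs₂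
      (by simpa [dotp_eq_dotProduct] using hws₂)
    have hu : u = (t₂ / (t₁ + t₂)) • (u + t₁ • w) + (t₁ / (t₁ + t₂)) • (u + t₂ • -w) := by
      match_scalars <;> field_simp <;> ring
    have hmono : ∀ u', maxFace Q u ⊆ maxFace Q u' →
        PointedCone.hull ℝ {v | IsFacetOf Q (maxFace Q v) ∧ maxFace Q u' ⊆ maxFace Q v} ≤
        PointedCone.hull ℝ {v | IsFacetOf Q (maxFace Q v) ∧ maxFace Q u ⊆ maxFace Q v} :=
      fun u' h => Submodule.span_mono fun v hv => ⟨hv.1, h.trans hv.2⟩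
    have hcomb := add_mem
      (PointedCone.smul_mem _ (div_pos ht₂ (add_pos ht₁ ht₂)).le
        (hmono _ hG₁ (ih _ (by omega) _ rfl)))
      (PointedCone.smul_mem _ (div_pos ht₁ (add_pos ht₁ ht₂)).le
        (hmono _ hG₂ (ih _ (by omega) _ rfl)))
    rwa [← hu] at hcomb

end NormalCone

theorem IsPolytope.exists_facets_inter_eq_maxFace {Q : Set (Fin N → ℝ)} (hQ : IsPolytope Q)
    (hfull : sdim Q = N) {u : Fin N → ℝ} (hne : (maxFace Q u).Nonempty) :
    ∃ T : Finset (Set (Fin N → ℝ)), (∀ F ∈ T, IsFacetOf Q F) ∧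
      T.card + sdim (maxFace Q u) ≤ N ∧ maxFace Q u = Q ∩ ⋂₀ ↑T := by
  classical
  obtain ⟨S, rfl⟩ := hQ
  obtain ⟨x₀, hx₀⟩ := hne
  have hS : S.Nonempty := Finset.coe_nonempty.1 (convexHull_nonempty_iff.1 ⟨x₀, hx₀.1⟩)
  obtain ⟨t, hts, hind, lam, hlam, hsum⟩ :=
    exists_linearIndepOn_pos_sum_eq_of_mem_hull (mem_hull_facet_normals hfull hS u)
  refine ⟨t.image (maxFace (convexHull ℝ ↑S)), ?_, ?_, ?_⟩
  · simpa using fun v hv => (hts hv).1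
  · have hspan : Submodule.span ℝ ↑t ≤ dotOrthogonal (vectorSpan ℝ (maxFace (convexHull ℝ ↑S) u)) :=
      Submodule.span_le.2 fun v hv => mem_dotOrthogonal_vectorSpan_iff.2 fun x hx y hy =>
        dotp_eq_of_mem_maxFace ((hts hv).2 hx) ((hts hv).2 hy)
    have h1 := finrank_span_finset_eq_card hind
    have h2 := Submodule.finrank_mono hspan
    have h3 := finrank_dotOrthogonal_add_finrank (vectorSpan ℝ (maxFace (convexHull ℝ ↑S) u))
    have h4 := t.card_image_le (f := maxFace (convexHull ℝ ↑S))
    rw [sdim]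
    omega
  · rw [← hsum, maxFace_sum_smul t lam hlam hx₀.1 fun v hv => (hts hv).2 hx₀]
    simp [sInter_image]

lemma IsPolytope.setOf_isFacetOf_finite {Q : Set (Fin N → ℝ)} (hQ : IsPolytope Q) :
    {F | IsFacetOf Q F}.Finite := by
  obtain ⟨S, rfl⟩ := hQ
  exact (setOf_isFaceOf_convexHull_finite S).subset fun _ hF => hF.1

end Faces

section Projection

variable {d m : ℕ}

lemma projd_eq_funLeft : (projd : (Fin (d + m) → ℝ) → Fin d → ℝ) =
    LinearMap.funLeft ℝ ℝ (Fin.castAdd m) := rfl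

lemma dotp_append_zero (c : Fin d → ℝ) (x : Fin (d + m) → ℝ) :
    dotp (Fin.append c (0 : Fin m → ℝ)) x = dotp c (projd x) := by
  simp [dotp, Fin.sum_univ_add, projd]

lemma image_projd_maxFace (Q : Set (Fin (d + m) → ℝ)) (c : Fin d → ℝ) :
    projd '' maxFace Q (Fin.append c 0) = maxFace (projd '' Q) c := by
  ext y
  simp only [maxFace, mem_image, mem_ofPred_eq, forall_exists_index, and_imp,
    forall_apply_eq_imp_iff₂, dotp_append_zero]
  constructor
  · rintro ⟨x, ⟨hxQ, hx⟩, rfl⟩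
    exact ⟨⟨x, hxQ, rfl⟩, hx⟩
  · rintro ⟨⟨x, hxQ, rfl⟩, hx⟩
    exact ⟨x, ⟨hxQ, hx⟩, rfl⟩

lemma sdim_image_projd_le (A : Set (Fin (d + m) → ℝ)) : sdim (projd '' A) ≤ sdim A := by
  rw [sdim, sdim, projd_eq_funLeft, ← LinearMap.coe_toAffineMap, ← AffineMap.map_vectorSpan]
  exact Submodule.finrank_map_le _ _

theorem IsPolytope.exists_facets_of_isFacetOf_image_projd {Q : Set (Fin (d + m) → ℝ)}
    (hQ : IsPolytope Q) (hfull : sdim Q = d + m) (hdim : sdim (projd '' Q) = d)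
    {F : Set (Fin d → ℝ)} (hF : IsFacetOf (projd '' Q) F) :
    ∃ T : Finset (Set (Fin (d + m) → ℝ)), (∀ G ∈ T, IsFacetOf Q G) ∧ T.card ≤ m + 1 ∧
      F = projd '' (Q ∩ ⋂₀ ↑T) := by
  obtain ⟨⟨c, rfl⟩, hne, hFdim⟩ := hF
  rw [← image_projd_maxFace] at hne hFdim ⊢
  obtain ⟨T, hT, hcard, heq⟩ := hQ.exists_facets_inter_eq_maxFace hfull hne.of_image
  have := sdim_image_projd_le (maxFace Q (Fin.append c 0))
  exact ⟨T, hT, by omega, by rw [heq]⟩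

end Projection

/-- If a full-dimensional polytope `Q` in `ℝ^(d+m)` with `fQ` facets projects onto the
`d`-dimensional polytope `P` with `fP` facets, then `fP ≤ (fQ + 1)^(m+1)`. -/
theorem facets_of_projection_bound (d m : ℕ)
    (Q : Set (Fin (d + m) → ℝ)) (hQ : IsPolytope Q) (hQdim : sdim Q = d + m)
    (P : Set (Fin d → ℝ)) (hP : P = projd '' Q) (hPdim : sdim P = d)
    (fQ fP : ℕ)
    (hfQ : {F | IsFacetOf Q F}.ncard = fQ)
    (hfP : {F | IsFacetOf P F}.ncard = fP) :
    fP ≤ (fQ + 1) ^ (m + 1) := by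
  subst hP hfQ hfP
  have hfin := hQ.setOf_isFacetOf_finite
  set 𝓕 := hfin.toFinset
  have hlift : ∀ F ∈ {F | IsFacetOf (projd '' Q) F},
      ∃ T ∈ 𝓕.powerset.filter (·.card ≤ m + 1), F = projd '' (Q ∩ ⋂₀ ↑T) := by
    intro F hF
    obtain ⟨T, hT, hcard, hFT⟩ := hQ.exists_facets_of_isFacetOf_image_projd hQdim hPdim hF
    exact ⟨T, Finset.mem_filter.2 ⟨Finset.mem_powerset.2 fun G hG =>
      hfin.mem_toFinset.2 (hT G hG), hcard⟩, hFT⟩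
  choose! τ hτ hFτ using hlift
  calc {F | IsFacetOf (projd '' Q) F}.ncard
      ≤ (𝓕.powerset.filter (·.card ≤ m + 1)).card := by
        rw [← Set.ncard_coe_finset]
        exact Set.ncard_le_ncard_of_injOn τ hτ fun F₁ h₁ F₂ h₂ h => by
          rw [hFτ F₁ h₁, hFτ F₂ h₂, h]
    _ ≤ (𝓕.card + 1) ^ (m + 1) := card_powerset_filter_card_le_le 𝓕 (m + 1)
    _ = _ := by rw [Set.ncard_eq_toFinset_card _ hfin]
end
end

section
/- Let P0, P1 ⊆ R^{d-1} be (d-1)-dimensional polytopes and let P = conv((P0 × {0}) ∪ (P1 × {1})) ⊆ R^d be their Cayley embedding. Let F0 be a nonempty face of P0 and F1 a nonempty face of P1, and let F = conv((F0 × {0}) ∪ (F1 × {1})). Then F is a face of P if and only if C_{P0}(F0) ∩ C_{P1}(F1) ≠ ∅. -/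
open Set Pointwise

noncomputable section

/-- `dotp c` as a linear map. -/
def dotL {n : ℕ} (c : Fin n → ℝ) : (Fin n → ℝ) →ₗ[ℝ] ℝ where
  toFun := dotp c
  map_add' x y := by simp [dotp, mul_add, Finset.sum_add_distrib]
  map_smul' a x := by simp [dotp, Finset.mul_sum, mul_left_comm]

lemma dotp_snoc {d : ℕ} (c x : Fin d → ℝ) (γ α : ℝ) :
    dotp (Fin.snoc c γ) (Fin.snoc x α) = dotp c x + γ * α := by
  simp [dotp, Fin.sum_univ_castSucc]

lemma dotp_le_of_mem_convexHull_s11 {n : ℕ} {c : Fin n → ℝ} {S : Set (Fin n → ℝ)} {M : ℝ}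
    (hS : ∀ s ∈ S, dotp c s ≤ M) {x : Fin n → ℝ} (hx : x ∈ convexHull ℝ S) :
    dotp c x ≤ M := by
  have : convexHull ℝ S ⊆ {x | dotL c x ≤ M} :=
    convexHull_min hS (convex_halfSpace_le (dotL c).isLinear M)
  exact this hx

lemma mem_convexHull_sep {n : ℕ} {c : Fin n → ℝ} {S : Set (Fin n → ℝ)} {M : ℝ}
    (hS : ∀ s ∈ S, dotp c s ≤ M) {x : Fin n → ℝ} (hx : x ∈ convexHull ℝ S)
    (hxM : dotp c x = M) : x ∈ convexHull ℝ {s ∈ S | dotp c s = M} := by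
  rw [convexHull_eq] at hx
  obtain ⟨ι, t, w, z, hw0, hw1, hz, hcm⟩ := hx
  have hsum : x = ∑ i ∈ t, w i • z i := by rw [← hcm, t.centerMass_eq_of_sum_1 _ hw1]
  have hdx : dotp c x = ∑ i ∈ t, w i * dotp c (z i) := by
    have := map_sum (dotL c) (fun i => w i • z i) t
    simp only [map_smul, smul_eq_mul] at this
    rw [hsum]; exact this
  have hzero : ∑ i ∈ t, w i * (M - dotp c (z i)) = 0 := by
    simp only [mul_sub, Finset.sum_sub_distrib, ← Finset.sum_mul, hw1, one_mul]
    rw [← hdx, hxM]; ring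
  have hterm : ∀ i ∈ t, w i * (M - dotp c (z i)) = 0 := by
    rw [Finset.sum_eq_zero_iff_of_nonneg] at hzero
    · exact hzero
    · intro i hi
      exact mul_nonneg (hw0 i hi) (by linarith [hS (z i) (hz i hi)])
  have hmax : ∀ i ∈ t, w i ≠ 0 → dotp c (z i) = M := by
    intro i hi hwi
    have := hterm i hi
    rcases mul_eq_zero.1 this with h | h
    · exact absurd h hwi
    · linarith
  rw [← hcm, ← Finset.centerMass_filter_ne_zero]
  apply Finset.centerMass_mem_convexHull
  · intro i hi; exact hw0 i (Finset.mem_filter.1 hi).1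
  · have : ∑ i ∈ {i ∈ t | w i ≠ 0}, w i = 1 := by
      rw [Finset.sum_filter_ne_zero]; exact hw1
    rw [this]; exact one_pos
  · intro i hi
    obtain ⟨hit, hwi⟩ := Finset.mem_filter.1 hi
    exact ⟨hz i hit, hmax i hit hwi⟩

lemma convex_maxFace {n : ℕ} {P : Set (Fin n → ℝ)} (hP : Convex ℝ P) (c : Fin n → ℝ) :
    Convex ℝ (maxFace P c) := by
  intro x hx y hy a b ha hb hab
  refine ⟨hP hx.1 hy.1 ha hb hab, fun v hv => ?_⟩
  have hdx := hx.2 v hv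
  have hdy := hy.2 v hv
  have heq : dotp c (a • x + b • y) = a * dotp c x + b * dotp c y := by
    have h1 := (dotL c).map_add (a • x) (b • y)
    have h2 := (dotL c).map_smul a x
    have h3 := (dotL c).map_smul b y
    simp only [smul_eq_mul, RingHom.id_apply] at h1 h2 h3
    show dotp c (a • x + b • y) = _
    calc dotp c (a • x + b • y) = dotL c (a • x + b • y) := rfl
      _ = dotL c (a • x) + dotL c (b • y) := h1
      _ = a * dotL c x + b * dotL c y := by rw [h2, h3]
      _ = a * dotp c x + b * dotp c y := rfl
  rw [heq]
  calc dotp c v = (a + b) * dotp c v := by rw [hab]; ring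
    _ = a * dotp c v + b * dotp c v := by ring
    _ ≤ a * dotp c x + b * dotp c y :=
        add_le_add (mul_le_mul_of_nonneg_left hdx ha) (mul_le_mul_of_nonneg_left hdy hb)

/-- maxFace of a convex hull, when the max is attained on the generating set. -/
lemma maxFace_convexHull {n : ℕ} {c : Fin n → ℝ} {S : Set (Fin n → ℝ)} {M : ℝ}
    (hS : ∀ s ∈ S, dotp c s ≤ M) {s₀ : Fin n → ℝ} (hs₀ : s₀ ∈ S) (hs₀M : dotp c s₀ = M) :
    maxFace (convexHull ℝ S) c = convexHull ℝ {s ∈ S | dotp c s = M} := by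
  apply Subset.antisymm
  · intro z hz
    have hz1 : dotp c z ≤ M := dotp_le_of_mem_convexHull_s11 hS hz.1
    have hz2 : M ≤ dotp c z := hs₀M ▸ hz.2 s₀ (subset_convexHull ℝ S hs₀)
    exact mem_convexHull_sep hS hz.1 (le_antisymm hz1 hz2)
  · apply convexHull_min
    · rintro s ⟨hsS, hsM⟩
      refine ⟨subset_convexHull ℝ S hsS, fun y hy => ?_⟩
      rw [hsM]; exact dotp_le_of_mem_convexHull_s11 hS hy
    · exact convex_maxFace (convex_convexHull ℝ S) c

/-- the snoc embedding as an affine map -/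
def snocA {d : ℕ} (α : ℝ) : (Fin d → ℝ) →ᵃ[ℝ] (Fin (d + 1) → ℝ) where
  toFun x := Fin.snoc x α
  linear := { toFun := fun x => Fin.snoc x 0
              map_add' := fun x y => by
                funext i
                refine Fin.lastCases ?_ (fun j => ?_) i <;> simp
              map_smul' := fun a x => by
                funext i
                refine Fin.lastCases ?_ (fun j => ?_) i <;> simp }
  map_vadd' p v := by
    funext i
    refine Fin.lastCases ?_ (fun j => ?_) i <;> simp

lemma convexHull_cay {d : ℕ} (α : ℝ) (S : Set (Fin d → ℝ)) :
    convexHull ℝ (cay α S) = cay α (convexHull ℝ S) := by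
  have : cay α S = (snocA α) '' S := rfl
  rw [this, ← AffineMap.image_convexHull]; rfl

lemma snoc_inj {d : ℕ} {x y : Fin d → ℝ} {α : ℝ}
    (h : (Fin.snoc x α : Fin (d+1) → ℝ) = Fin.snoc y α) : x = y := by
  funext i
  have := congrFun h i.castSucc
  simpa using this

section Main

variable {d : ℕ}

/-- Points of the Cayley hull at height 0 come from the bottom part. -/
lemma slice_zero {A B : Set (Fin d → ℝ)} {z : Fin (d+1) → ℝ}
    (hz : z ∈ convexHull ℝ (cay 0 A ∪ cay 1 B)) (h0 : z (Fin.last d) = 0) :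
    z ∈ convexHull ℝ (cay 0 A) := by
  have hbound : ∀ s ∈ cay 0 A ∪ cay 1 B, dotp (Fin.snoc (0 : Fin d → ℝ) (-1)) s ≤ 0 := by
    rintro s (⟨x, hx, rfl⟩ | ⟨x, hx, rfl⟩) <;> rw [dotp_snoc] <;> simp [dotp]
  have hval : dotp (Fin.snoc (0 : Fin d → ℝ) (-1)) z = 0 := by
    have : dotp (Fin.snoc (0 : Fin d → ℝ) (-1)) z = - z (Fin.last d) := by
      simp [dotp, Fin.sum_univ_castSucc]
    rw [this, h0, neg_zero]
  have hT : {s ∈ cay 0 A ∪ cay 1 B | dotp (Fin.snoc (0 : Fin d → ℝ) (-1)) s = 0}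
      = cay 0 A := by
    ext s
    constructor
    · rintro ⟨(⟨x, hx, rfl⟩ | ⟨x, hx, rfl⟩), hs⟩
      · exact ⟨x, hx, rfl⟩
      · rw [dotp_snoc] at hs; simp [dotp] at hs
    · rintro ⟨x, hx, rfl⟩
      exact ⟨Or.inl ⟨x, hx, rfl⟩, by rw [dotp_snoc]; simp [dotp]⟩
  have := mem_convexHull_sep hbound hz hval
  rwa [hT] at this

/-- Points of the Cayley hull at height 1 come from the top part. -/
lemma slice_one {A B : Set (Fin d → ℝ)} {z : Fin (d+1) → ℝ}
    (hz : z ∈ convexHull ℝ (cay 0 A ∪ cay 1 B)) (h1 : z (Fin.last d) = 1) :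
    z ∈ convexHull ℝ (cay 1 B) := by
  have hbound : ∀ s ∈ cay 0 A ∪ cay 1 B, dotp (Fin.snoc (0 : Fin d → ℝ) 1) s ≤ 1 := by
    rintro s (⟨x, hx, rfl⟩ | ⟨x, hx, rfl⟩) <;> rw [dotp_snoc] <;> simp [dotp]
  have hval : dotp (Fin.snoc (0 : Fin d → ℝ) 1) z = 1 := by
    have : dotp (Fin.snoc (0 : Fin d → ℝ) 1) z = z (Fin.last d) := by
      simp [dotp, Fin.sum_univ_castSucc]
    rw [this, h1]
  have hT : {s ∈ cay 0 A ∪ cay 1 B | dotp (Fin.snoc (0 : Fin d → ℝ) 1) s = 1}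
      = cay 1 B := by
    ext s
    constructor
    · rintro ⟨(⟨x, hx, rfl⟩ | ⟨x, hx, rfl⟩), hs⟩
      · rw [dotp_snoc] at hs; simp [dotp] at hs
      · exact ⟨x, hx, rfl⟩
    · rintro ⟨x, hx, rfl⟩
      exact ⟨Or.inr ⟨x, hx, rfl⟩, by rw [dotp_snoc]; simp [dotp]⟩
  have := mem_convexHull_sep hbound hz hval
  rwa [hT] at this

end Main

/-- Faces of the Cayley embedding: the Cayley embedding `F` of faces `F0`, `F1` of
`P0`, `P1` is a face of the Cayley embedding `P` of `P0` and `P1` iff the optimality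
cones of `F0` and `F1` intersect. -/
theorem cayley_face_iff (d : ℕ)
    (P0 P1 : Set (Fin d → ℝ)) (h0 : IsPolytope P0) (h1 : IsPolytope P1)
    (hne0 : P0.Nonempty) (hne1 : P1.Nonempty)
    (hd0 : sdim P0 = d) (hd1 : sdim P1 = d)
    (F0 F1 : Set (Fin d → ℝ))
    (hF0 : IsFaceOf P0 F0) (hF1 : IsFaceOf P1 F1)
    (hF0ne : F0.Nonempty) (hF1ne : F1.Nonempty)
    (P : Set (Fin (d + 1) → ℝ)) (hP : P = convexHull ℝ (cay 0 P0 ∪ cay 1 P1))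
    (F : Set (Fin (d + 1) → ℝ)) (hF : F = convexHull ℝ (cay 0 F0 ∪ cay 1 F1)) :
    IsFaceOf P F ↔ (optCone P0 F0 ∩ optCone P1 F1).Nonempty := by
  obtain ⟨c0, hF0eq⟩ := hF0
  obtain ⟨c1, hF1eq⟩ := hF1
  have hF0P0 : F0 ⊆ P0 := by rw [hF0eq]; exact fun x hx => hx.1
  have hF1P1 : F1 ⊆ P1 := by rw [hF1eq]; exact fun x hx => hx.1
  have hconvP0 : Convex ℝ P0 := by
    obtain ⟨S0, h⟩ := h0; rw [h]; exact convex_convexHull ℝ _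
  have hconvP1 : Convex ℝ P1 := by
    obtain ⟨S1, h⟩ := h1; rw [h]; exact convex_convexHull ℝ _
  have hconvF0 : Convex ℝ F0 := by rw [hF0eq]; exact convex_maxFace hconvP0 c0
  have hconvF1 : Convex ℝ F1 := by rw [hF1eq]; exact convex_maxFace hconvP1 c1
  obtain ⟨x0, hx0⟩ := hF0ne
  obtain ⟨x1, hx1⟩ := hF1ne
  have hP0P : ∀ y ∈ P0, (Fin.snoc y 0 : Fin (d+1) → ℝ) ∈ P := fun y hy =>
    hP ▸ subset_convexHull ℝ _ (Or.inl ⟨y, hy, rfl⟩)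
  have hP1P : ∀ y ∈ P1, (Fin.snoc y 1 : Fin (d+1) → ℝ) ∈ P := fun y hy =>
    hP ▸ subset_convexHull ℝ _ (Or.inr ⟨y, hy, rfl⟩)
  constructor
  · rintro ⟨c', hc'⟩
    set c : Fin d → ℝ := fun i => c' i.castSucc with hc
    set γ : ℝ := c' (Fin.last d) with hγ
    have hc'eq : c' = Fin.snoc c γ := by
      funext i
      refine Fin.lastCases ?_ (fun j => ?_) i <;> simp [hc, hγ]
    have hdot : ∀ (x : Fin d → ℝ) (α : ℝ), dotp c' (Fin.snoc x α) = dotp c x + γ * α := by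
      intro x α; rw [hc'eq]; exact dotp_snoc c x γ α
    -- x0 and x1 give maximizers of c' on P
    have hx0m : (Fin.snoc x0 0 : Fin (d+1) → ℝ) ∈ maxFace P c' := by
      rw [← hc', hF]; exact subset_convexHull ℝ _ (Or.inl ⟨x0, hx0, rfl⟩)
    have hx1m : (Fin.snoc x1 1 : Fin (d+1) → ℝ) ∈ maxFace P c' := by
      rw [← hc', hF]; exact subset_convexHull ℝ _ (Or.inr ⟨x1, hx1, rfl⟩)
    have hsub0 : F0 ⊆ maxFace P0 c := by
      intro x hx
      have hxm : (Fin.snoc x 0 : Fin (d+1) → ℝ) ∈ maxFace P c' := by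
        rw [← hc', hF]; exact subset_convexHull ℝ _ (Or.inl ⟨x, hx, rfl⟩)
      refine ⟨hF0P0 hx, fun y hy => ?_⟩
      have := hxm.2 _ (hP0P y hy)
      rw [hdot, hdot] at this; linarith
    have hsub1 : F1 ⊆ maxFace P1 c := by
      intro x hx
      have hxm : (Fin.snoc x 1 : Fin (d+1) → ℝ) ∈ maxFace P c' := by
        rw [← hc', hF]; exact subset_convexHull ℝ _ (Or.inr ⟨x, hx, rfl⟩)
      refine ⟨hF1P1 hx, fun y hy => ?_⟩
      have := hxm.2 _ (hP1P y hy)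
      rw [hdot, hdot] at this; linarith
    have hsup0 : maxFace P0 c ⊆ F0 := by
      intro y hy
      have h1 : dotp c x0 ≤ dotp c y := hy.2 x0 (hF0P0 hx0)
      have hymax : (Fin.snoc y 0 : Fin (d+1) → ℝ) ∈ maxFace P c' := by
        refine ⟨hP0P y hy.1, fun z hz => ?_⟩
        calc dotp c' z ≤ dotp c' (Fin.snoc x0 0) := hx0m.2 z hz
          _ = dotp c x0 + γ * 0 := hdot x0 0
          _ ≤ dotp c y + γ * 0 := by linarith
          _ = dotp c' (Fin.snoc y 0) := (hdot y 0).symm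
      have hyF : (Fin.snoc y 0 : Fin (d+1) → ℝ) ∈ F := by rw [hc']; exact hymax
      rw [hF] at hyF
      have hslice := slice_zero hyF (by simp)
      rw [convexHull_cay] at hslice
      obtain ⟨x', hx', hxx⟩ := hslice
      have hxy : x' = y := snoc_inj hxx
      rw [hconvF0.convexHull_eq] at hx'
      rwa [hxy] at hx'
    have hsup1 : maxFace P1 c ⊆ F1 := by
      intro y hy
      have h1 : dotp c x1 ≤ dotp c y := hy.2 x1 (hF1P1 hx1)
      have hymax : (Fin.snoc y 1 : Fin (d+1) → ℝ) ∈ maxFace P c' := by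
        refine ⟨hP1P y hy.1, fun z hz => ?_⟩
        calc dotp c' z ≤ dotp c' (Fin.snoc x1 1) := hx1m.2 z hz
          _ = dotp c x1 + γ * 1 := hdot x1 1
          _ ≤ dotp c y + γ * 1 := by linarith
          _ = dotp c' (Fin.snoc y 1) := (hdot y 1).symm
      have hyF : (Fin.snoc y 1 : Fin (d+1) → ℝ) ∈ F := by rw [hc']; exact hymax
      rw [hF] at hyF
      have hslice := slice_one hyF (by simp)
      rw [convexHull_cay] at hslice
      obtain ⟨x', hx', hxx⟩ := hslice
      have hxy : x' = y := snoc_inj hxx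
      rw [hconvF1.convexHull_eq] at hx'
      rwa [hxy] at hx'
    exact ⟨c, Subset.antisymm hsup0 hsub0, Subset.antisymm hsup1 hsub1⟩
  · rintro ⟨c, hcF0, hcF1⟩
    have hcF0 : maxFace P0 c = F0 := hcF0
    have hcF1 : maxFace P1 c = F1 := hcF1
    set M0 : ℝ := dotp c x0 with hM0
    set M1 : ℝ := dotp c x1 with hM1
    set γ : ℝ := M0 - M1 with hγ
    refine ⟨Fin.snoc c γ, ?_⟩
    have hx0m : x0 ∈ maxFace P0 c := hcF0 ▸ hx0
    have hx1m : x1 ∈ maxFace P1 c := hcF1 ▸ hx1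
    have hmax0 : ∀ y ∈ P0, dotp c y ≤ M0 := fun y hy => hx0m.2 y hy
    have hmax1 : ∀ y ∈ P1, dotp c y ≤ M1 := fun y hy => hx1m.2 y hy
    have hbound : ∀ s ∈ cay 0 P0 ∪ cay 1 P1, dotp (Fin.snoc c γ) s ≤ M0 := by
      rintro s (⟨x, hx, rfl⟩ | ⟨x, hx, rfl⟩) <;> rw [dotp_snoc]
      · have := hmax0 x hx; linarith
      · have := hmax1 x hx; rw [hγ]; linarith
    have hs₀ : (Fin.snoc x0 0 : Fin (d+1) → ℝ) ∈ cay 0 P0 ∪ cay 1 P1 :=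
      Or.inl ⟨x0, hF0P0 hx0, rfl⟩
    have hs₀M : dotp (Fin.snoc c γ) (Fin.snoc x0 0) = M0 := by
      rw [dotp_snoc]; rw [hM0]; ring
    rw [hP, maxFace_convexHull hbound hs₀ hs₀M, hF]
    congr 1
    ext s
    constructor
    · rintro (⟨x, hx, rfl⟩ | ⟨x, hx, rfl⟩)
      · have hxm : x ∈ maxFace P0 c := hcF0 ▸ hx
        have hxM : dotp c x = M0 := le_antisymm (hmax0 x hxm.1) (hxm.2 x0 (hF0P0 hx0))
        refine ⟨Or.inl ⟨x, hF0P0 hx, rfl⟩, ?_⟩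
        rw [dotp_snoc, hxM]; ring
      · have hxm : x ∈ maxFace P1 c := hcF1 ▸ hx
        have hxM : dotp c x = M1 := le_antisymm (hmax1 x hxm.1) (hxm.2 x1 (hF1P1 hx1))
        refine ⟨Or.inr ⟨x, hF1P1 hx, rfl⟩, ?_⟩
        rw [dotp_snoc, hxM, hγ]; ring
    · rintro ⟨(⟨x, hx, rfl⟩ | ⟨x, hx, rfl⟩), hs⟩
      · rw [dotp_snoc] at hs
        left
        refine ⟨x, ?_, rfl⟩
        rw [← hcF0]
        exact ⟨hx, fun y hy => by have := hmax0 y hy; linarith⟩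
      · rw [dotp_snoc] at hs
        right
        refine ⟨x, ?_, rfl⟩
        rw [← hcF1]
        refine ⟨hx, fun y hy => ?_⟩
        have := hmax1 y hy
        rw [hγ] at hs; linarith
end
end

section
/- Fix δ > 0 and set γ = (1/2)·(2+δ)/(1+δ). A point x* with all coordinates in {±(1+δ)/d} violates the inequality ∑_{i=1}^d x_i ≤ 1 if and only if more than γ·d of its coordinates are positive. Consequently, the number of such points violating the inequality is at most 2^{d·H(1−γ)}, where H is the binary entropy function. -/
open Set Pointwise

noncomputable section

private lemma entropy_bound' (d : ℕ) (p : ℝ) (hp : 0 < p) (hp2 : p ≤ 1/2) :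
    (∑ j ∈ (Finset.range (d+1)).filter (fun j : ℕ => (j:ℝ) ≤ p * d), (d.choose j : ℝ))
      ≤ (2:ℝ) ^ ((d:ℝ) * binEnt p) := by
  set q : ℝ := 1 - p with hqdef
  have hq : 0 < q := by simp [hqdef]; linarith
  have hpq : p ≤ q := by simp [hqdef]; linarith
  have hp1 : p < 1 := by linarith
  -- the binomial sum is 1
  have hsum1 : ∑ j ∈ Finset.range (d+1), (d.choose j : ℝ) * p^j * q^(d-j) = 1 := by
    have h := add_pow p q d
    rw [show p + q = 1 by ring, one_pow] at h
    calc ∑ j ∈ Finset.range (d+1), (d.choose j : ℝ) * p^j * q^(d-j)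
        = ∑ j ∈ Finset.range (d+1), p^j * q^(d-j) * (d.choose j : ℝ) :=
          Finset.sum_congr rfl (fun j _ => by ring)
      _ = 1 := h.symm
  have hB : 0 < p ^ (p * (d:ℝ)) * q ^ (q * (d:ℝ)) := by positivity
  -- key pointwise bound
  have hkey : ∀ j ∈ (Finset.range (d+1)).filter (fun j : ℕ => (j:ℝ) ≤ p * d),
      p ^ (p * (d:ℝ)) * q ^ (q * (d:ℝ)) ≤ p^j * q^(d-j) := by
    intro j hj
    simp only [Finset.mem_filter, Finset.mem_range] at hj
    obtain ⟨hjd, hjp⟩ := hj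
    have hjd' : j ≤ d := Nat.lt_succ_iff.mp hjd
    have hcast : ((d - j : ℕ) : ℝ) = (d:ℝ) - j := by
      push_cast [hjd']; ring
    have hrw : (p:ℝ)^j * q^(d-j) = p ^ ((j:ℝ)) * q ^ ((d:ℝ) - (j:ℝ)) := by
      rw [← Real.rpow_natCast p j, ← Real.rpow_natCast q (d - j), hcast]
    rw [hrw]
    have hgen : ∀ x : ℝ, 0 ≤ x → p ^ x * q ^ ((d:ℝ) - x) = q ^ (d:ℝ) * (p/q) ^ x := by
      intro x _
      rw [Real.div_rpow hp.le hq.le, Real.rpow_sub hq]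
      field_simp
    have h1 : p * (d:ℝ) = p * d := rfl
    have hqd : q * (d:ℝ) = (d:ℝ) - p * d := by rw [hqdef]; ring
    rw [hqd, hgen _ (by positivity), hgen _ (by positivity)]
    have hb1 : p / q ≤ 1 := (div_le_one hq).2 hpq
    have hb0 : 0 < p / q := div_pos hp hq
    exact mul_le_mul_of_nonneg_left
      (Real.rpow_le_rpow_of_exponent_ge hb0 hb1 hjp)
      (Real.rpow_pos_of_pos hq _).le
  -- sum bound
  have hchain : (∑ j ∈ (Finset.range (d+1)).filter (fun j : ℕ => (j:ℝ) ≤ p * d), (d.choose j : ℝ))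
      * (p ^ (p * (d:ℝ)) * q ^ (q * (d:ℝ))) ≤ 1 := by
    rw [Finset.sum_mul]
    calc ∑ j ∈ (Finset.range (d+1)).filter (fun j : ℕ => (j:ℝ) ≤ p * d),
          (d.choose j : ℝ) * (p ^ (p * (d:ℝ)) * q ^ (q * (d:ℝ)))
        ≤ ∑ j ∈ (Finset.range (d+1)).filter (fun j : ℕ => (j:ℝ) ≤ p * d),
          (d.choose j : ℝ) * p^j * q^(d-j) := by
          apply Finset.sum_le_sum
          intro j hj
          have := hkey j hj
          have hc : (0:ℝ) ≤ d.choose j := by positivity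
          calc (d.choose j : ℝ) * (p ^ (p * (d:ℝ)) * q ^ (q * (d:ℝ)))
              ≤ (d.choose j : ℝ) * (p^j * q^(d-j)) := by
                exact mul_le_mul_of_nonneg_left this hc
            _ = (d.choose j : ℝ) * p^j * q^(d-j) := by ring
      _ ≤ ∑ j ∈ Finset.range (d+1), (d.choose j : ℝ) * p^j * q^(d-j) := by
          apply Finset.sum_le_sum_of_subset_of_nonneg (Finset.filter_subset _ _)
          intro j _ _
          positivity
      _ = 1 := hsum1
  -- identity for 2^(d * binEnt p)
  have hpow : (2:ℝ) ^ ((d:ℝ) * binEnt p) * (p ^ (p * (d:ℝ)) * q ^ (q * (d:ℝ))) = 1 := by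
    have hE : (d:ℝ) * binEnt p =
        Real.logb 2 p * (-(p * d)) + Real.logb 2 q * (-(q * d)) := by
      rw [binEnt, ← hqdef]; ring
    rw [hE, Real.rpow_add two_pos,
      Real.rpow_mul (by norm_num : (0:ℝ) ≤ 2), Real.rpow_mul (by norm_num : (0:ℝ) ≤ 2),
      Real.rpow_logb two_pos (by norm_num) hp, Real.rpow_logb two_pos (by norm_num) hq,
      Real.rpow_neg hp.le, Real.rpow_neg hq.le]
    field_simp
  calc (∑ j ∈ (Finset.range (d+1)).filter (fun j : ℕ => (j:ℝ) ≤ p * d), (d.choose j : ℝ))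
      = (∑ j ∈ (Finset.range (d+1)).filter (fun j : ℕ => (j:ℝ) ≤ p * d), (d.choose j : ℝ))
        * (p ^ (p * (d:ℝ)) * q ^ (q * (d:ℝ))) * (p ^ (p * (d:ℝ)) * q ^ (q * (d:ℝ)))⁻¹ := by
        field_simp
    _ ≤ 1 * (p ^ (p * (d:ℝ)) * q ^ (q * (d:ℝ)))⁻¹ := by
        apply mul_le_mul_of_nonneg_right hchain (by positivity)
    _ = (2:ℝ) ^ ((d:ℝ) * binEnt p) := by
        rw [one_mul]
        exact (eq_inv_of_mul_eq_one_left hpow).symm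

private lemma sign_card' (d : ℕ) (hd : 1 ≤ d) (δ : ℝ) (hδ : 0 < δ)
    (γ : ℝ) (hγ : γ = (1 / 2) * ((2 + δ) / (1 + δ))) (x : Fin d → ℝ)
    (hx : ∀ i, x i = (1 + δ) / d ∨ x i = -((1 + δ) / d)) :
    1 < ∑ i, x i ↔ γ * d < ((Finset.univ.filter (fun i => 0 < x i)).card : ℝ) := by
  have hd0 : (0:ℝ) < d := by exact_mod_cast hd
  set a : ℝ := (1 + δ) / d with hadef
  have ha : 0 < a := by positivity
  set s := Finset.univ.filter (fun i => 0 < x i) with hsdef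
  set t := Finset.univ.filter (fun i => ¬ 0 < x i) with htdef
  have hkm : s.card + t.card = d := by
    rw [hsdef, htdef, Finset.card_filter_add_card_filter_not]
    simp
  have h1 : ∑ i ∈ s, x i = s.card * a := by
    rw [Finset.sum_congr rfl (fun i hi => ?_), Finset.sum_const, nsmul_eq_mul]
    rcases hx i with h | h
    · exact h
    · exfalso
      rw [hsdef, Finset.mem_filter] at hi
      rw [h] at hi; linarith [hi.2]
  have h2 : ∑ i ∈ t, x i = t.card * (-a) := by
    rw [Finset.sum_congr rfl (fun i hi => ?_), Finset.sum_const, nsmul_eq_mul]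
    rcases hx i with h | h
    · exfalso
      rw [htdef, Finset.mem_filter] at hi
      rw [h] at hi; exact hi.2 ha
    · exact h
  have hsum : ∑ i, x i = s.card * a + t.card * (-a) := by
    rw [← h1, ← h2, hsdef, htdef, Finset.sum_filter_add_sum_filter_not]
  have hcast : (s.card : ℝ) + t.card = d := by exact_mod_cast hkm
  have hb : a * d = 1 + δ := by rw [hadef]; field_simp
  have hg : γ * (2 * (1 + δ)) = 2 + δ := by
    rw [hγ]; field_simp
  rw [hsum]
  constructor
  · intro h
    nlinarith [mul_lt_mul_of_pos_right h hd0, hδ, hd0]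
  · intro h
    nlinarith [mul_lt_mul_of_pos_right h (show (0:ℝ) < 2*(1+δ) by linarith), hδ, hd0]

/-- A point with all coordinates `±(1+δ)/d` violates `∑ x_i ≤ 1` iff more than `γ·d`
of its coordinates are positive, where `γ = (1/2)(2+δ)/(1+δ)`; hence the number of
such violating points is at most `2^(d·H(1−γ))`. -/
theorem cross_polytope_violators_count (d : ℕ) (hd : 1 ≤ d) (δ : ℝ) (hδ : 0 < δ)
    (γ : ℝ) (hγ : γ = (1 / 2) * ((2 + δ) / (1 + δ))) :
    (∀ x : Fin d → ℝ,
      (∀ i, x i = (1 + δ) / d ∨ x i = -((1 + δ) / d)) →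
      (1 < ∑ i, x i ↔ γ * d < ({i | 0 < x i} : Set (Fin d)).ncard)) ∧
    (({x : Fin d → ℝ |
        (∀ i, x i = (1 + δ) / d ∨ x i = -((1 + δ) / d)) ∧ 1 < ∑ i, x i}.ncard : ℝ)
      ≤ (2 : ℝ) ^ ((d : ℝ) * binEnt (1 - γ))) := by
  have hd0 : (0:ℝ) < d := by exact_mod_cast hd
  have h1δ : (0:ℝ) < 1 + δ := by linarith
  have hg : γ * (2 * (1 + δ)) = 2 + δ := by rw [hγ]; field_simp
  have hγhalf : 1/2 ≤ γ := by nlinarith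
  have hγ1 : γ < 1 := by nlinarith
  have hncard : ∀ x : Fin d → ℝ,
      (∀ i, x i = (1 + δ) / d ∨ x i = -((1 + δ) / d)) →
      ({i | 0 < x i} : Set (Fin d)).ncard
        = (Finset.univ.filter (fun i => 0 < x i)).card := by
    intro x _
    have : ({i | 0 < x i} : Set (Fin d))
        = ↑(Finset.univ.filter (fun i => 0 < x i)) := by ext i; simp
    rw [this, Set.ncard_coe_finset]
  constructor
  · intro x hx
    rw [sign_card' d hd δ hδ γ hγ x hx, hncard x hx]
  · -- counting part
    set a : ℝ := (1 + δ) / d with hadef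
    have ha : 0 < a := by positivity
    set V : Set (Fin d → ℝ) := {x : Fin d → ℝ |
        (∀ i, x i = (1 + δ) / d ∨ x i = -((1 + δ) / d)) ∧ 1 < ∑ i, x i} with hVdef
    set g : Finset (Fin d) → (Fin d → ℝ) := fun s => fun i => if i ∈ s then a else -a
      with hgdef
    set F : Finset (Finset (Fin d)) :=
      Finset.univ.filter (fun s : Finset (Fin d) => γ * d < (s.card : ℝ)) with hFdef
    have hsub : V ⊆ g '' (↑F : Set (Finset (Fin d))) := by
      intro x hx
      obtain ⟨hx1, hx2⟩ := hx
      refine ⟨Finset.univ.filter (fun i => 0 < x i), ?_, ?_⟩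
      · simp only [hFdef, Finset.coe_filter, Set.mem_setOf_eq, Finset.mem_univ, true_and]
        exact (sign_card' d hd δ hδ γ hγ x hx1).mp hx2
      · funext i
        simp only [hgdef]
        by_cases hi : 0 < x i
        · simp only [Finset.mem_filter, Finset.mem_univ, true_and, hi, if_true]
          rcases hx1 i with h | h
          · rw [h]
          · exfalso; rw [h] at hi; linarith
        · simp only [Finset.mem_filter, Finset.mem_univ, true_and, hi, if_false]
          rcases hx1 i with h | h
          · exfalso; rw [h] at hi; exact hi ha
          · rw [h]
    have hVF : (V.ncard : ℝ) ≤ (F.card : ℝ) := by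
      have h1 : V.ncard ≤ (g '' (↑F : Set (Finset (Fin d)))).ncard :=
        Set.ncard_le_ncard hsub (Set.toFinite _)
      have h2 : (g '' (↑F : Set (Finset (Fin d)))).ncard ≤ (↑F : Set (Finset (Fin d))).ncard :=
        Set.ncard_image_le (Set.toFinite _)
      have h3 : (↑F : Set (Finset (Fin d))).ncard = F.card := Set.ncard_coe_finset _
      exact_mod_cast le_trans h1 (h3 ▸ h2)
    set F' : Finset (Finset (Fin d)) :=
      Finset.univ.filter (fun t : Finset (Fin d) => (t.card : ℝ) < (1 - γ) * d) with hF'def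
    have hcompl : ∀ s : Finset (Fin d), ((sᶜ.card : ℝ)) = d - s.card := by
      intro s
      rw [Finset.card_compl, Fintype.card_fin]
      have := Finset.card_le_univ s
      simp [Nat.cast_sub (by simpa using this)]
    have hFF' : F.card = F'.card := by
      refine Finset.card_bij' (fun s _ => sᶜ) (fun t _ => tᶜ) ?_ ?_
        (fun s _ => compl_compl s) (fun t _ => compl_compl t)
      · intro s hs
        simp only [hFdef, Finset.mem_filter, Finset.mem_univ, true_and] at hs
        simp only [hF'def, Finset.mem_filter, Finset.mem_univ, true_and, hcompl s]
        linarith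
      · intro t ht
        simp only [hF'def, Finset.mem_filter, Finset.mem_univ, true_and] at ht
        simp only [hFdef, Finset.mem_filter, Finset.mem_univ, true_and, hcompl t] at ht ⊢
        linarith
    have hF'sum : (F'.card : ℝ) ≤
        ∑ j ∈ (Finset.range (d+1)).filter (fun j : ℕ => (j:ℝ) ≤ (1-γ) * d),
          (d.choose j : ℝ) := by
      have hfib : F'.card = ∑ j ∈ Finset.range (d+1),
          (F'.filter (fun t => t.card = j)).card := by
        apply Finset.card_eq_sum_card_fiberwise
        intro t _
        simpa using Finset.card_le_univ t
      have hbound : ∀ j ∈ Finset.range (d+1),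
          ((F'.filter (fun t => t.card = j)).card : ℝ)
            ≤ if (j:ℝ) ≤ (1-γ) * d then (d.choose j : ℝ) else 0 := by
        intro j _
        by_cases hj : (j:ℝ) ≤ (1-γ) * d
        · rw [if_pos hj]
          have hsub2 : F'.filter (fun t => t.card = j) ⊆ Finset.powersetCard j Finset.univ := by
            intro t ht
            simp only [Finset.mem_filter] at ht
            rw [Finset.mem_powersetCard_univ]
            exact ht.2
          have := Finset.card_le_card hsub2
          rw [Finset.card_powersetCard, Finset.card_univ, Fintype.card_fin] at this
          exact_mod_cast this
        · rw [if_neg hj]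
          have : F'.filter (fun t => t.card = j) = ∅ := by
            rw [Finset.filter_eq_empty_iff]
            intro t ht hcard
            simp only [hF'def, Finset.mem_filter, Finset.mem_univ, true_and] at ht
            rw [hcard] at ht
            exact hj ht.le
          rw [this]; simp
      calc (F'.card : ℝ)
          = ∑ j ∈ Finset.range (d+1), ((F'.filter (fun t => t.card = j)).card : ℝ) := by
            rw [hfib]; push_cast; ring
        _ ≤ ∑ j ∈ Finset.range (d+1), (if (j:ℝ) ≤ (1-γ) * d then (d.choose j : ℝ) else 0) :=
            Finset.sum_le_sum hbound
        _ = ∑ j ∈ (Finset.range (d+1)).filter (fun j : ℕ => (j:ℝ) ≤ (1-γ) * d),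
              (d.choose j : ℝ) := (Finset.sum_filter _ _).symm
    have hent := entropy_bound' d (1 - γ) (by linarith) (by linarith)
    calc (V.ncard : ℝ) ≤ (F.card : ℝ) := hVF
      _ = (F'.card : ℝ) := by rw [hFF']
      _ ≤ _ := le_trans hF'sum hent
end
end
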